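/- arXiv:1810.08435 — 3 statements merged into one kernel-verified Lean document; each statement's English description precedes it below -/
import Mathlib

section
/- One-dimensional fractional identity: for σ = 1/2 and x ∈ (-1,1), the function u(x) = (1-x²)^{1/2} (extended by 0 outside (-1,1)) satisfies the half-Laplacian equation (-Δ)^{1/2} u(x) = 1 for all x ∈ (-1,1), where (-Δ)^{1/2} u(x) = (1/π) P.V. ∫_ℝ (u(x)-u(y))/(x-y)² dy, equivalently (1/π)∫_ℝ (2u(x)-u(x+y)-u(x-y))/(2y²) dy. -/
/-!
For fixed `x ∈ (-1, 1)` put `c = √(1 - x²)` and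
`K(t) = -√(1 - t²)/(t - x) - arcsin t + (x/c) log |(1 - x t + c √(1 - t²))/(t - x)|`
for `t ∈ [-1, 1]`, extended as the constants `K(-1) = π/2` and `K(1) = -π/2` outside
(`K = primitive x`). Then `K` is a primitive of `√(1 - t²)/(t - x)²` on `ℝ ∖ {x}`; at `t = ±1`
this follows from the continuity of the derivative there. Consequently
`G(y) = (K(x - y) - K(x + y))/2 - c/y` (`G = integrandPrimitive x`) is a primitive of the
integrand on `(0, ∞)`. It tends to `0` as `y → 0⁺`, because the singular parts of `K(x ± y)`
combine into `(u(x + y) + u(x - y) - 2u(x))/(2y) → 0`, and to `(K(-1) - K(1))/2 = π/2` as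
`y → ∞`. The integrand is even in `y`, so the integral over `ℝ` is `π`.
-/

open Real MeasureTheory Set Filter Topology

theorem hasDerivAt_of_eventually_hasDerivAt_of_ne {E : Type*} [NormedAddCommGroup E]
    [NormedSpace ℝ E] {f g : ℝ → E} {a : ℝ} (hd : ∀ᶠ y in 𝓝[≠] a, HasDerivAt f (g y) y)
    (hf : ContinuousAt f a) (hg : ContinuousAt g a) : HasDerivAt f (g a) a := by
  set s := {y | HasDerivAt f (g y) y}
  have hdiff : DifferentiableOn ℝ f s := fun y hy => hy.differentiableAt.differentiableWithinAt
  have hderiv : ∀ l ≤ 𝓝[≠] a, Tendsto (deriv f) l (𝓝 (g a)) := fun l hl =>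
    (hg.tendsto.mono_left (hl.trans nhdsWithin_le_nhds)).congr'
      (hd.filter_mono hl |>.mono fun y hy => hy.deriv.symm)
  have hGT : 𝓝[>] a ≤ 𝓝[≠] a := nhdsWithin_mono _ fun y hy => ne_of_gt hy
  have hLT : 𝓝[<] a ≤ 𝓝[≠] a := nhdsWithin_mono _ fun y hy => ne_of_lt hy
  have hright := hasDerivWithinAt_Ici_of_tendsto_deriv hdiff hf.continuousWithinAt
    (hGT hd) (hderiv _ hGT)
  have hleft := hasDerivWithinAt_Iic_of_tendsto_deriv hdiff hf.continuousWithinAt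
    (hLT hd) (hderiv _ hLT)
  simpa using hleft.union hright

theorem hasDerivAt_sqrt_one_sub_sq {t : ℝ} (ht : t ∈ Ioo (-1 : ℝ) 1) :
    HasDerivAt (fun s => √(1 - s ^ 2)) (-t / √(1 - t ^ 2)) t := by
  have hpos : 0 < 1 - t ^ 2 := by nlinarith [ht.1, ht.2]
  convert ((hasDerivAt_pow 2 t).const_sub 1).sqrt hpos.ne' using 1
  field_simp
  ring

theorem sqrt_max_zero (a : ℝ) : √(max a 0) = √a := by
  rcases le_total a 0 with h | h
  · rw [max_eq_right h, sqrt_zero, sqrt_eq_zero'.2 h]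
  · rw [max_eq_left h]

namespace HalfLaplacianSemicircle

variable {x t : ℝ}

noncomputable def logNumer (x t : ℝ) : ℝ := 1 - x * t + √(1 - x ^ 2) * √(1 - t ^ 2)

theorem logNumer_pos (hx : x ∈ Ioo (-1 : ℝ) 1) (ht : t ∈ Icc (-1 : ℝ) 1) : 0 < logNumer x t := by
  have : x * t < 1 :=
    calc x * t ≤ |x| * |t| := (le_abs_self _).trans (abs_mul x t).le
      _ ≤ |x| := mul_le_of_le_one_right (abs_nonneg x) (abs_le.2 ht)
      _ < 1 := abs_lt.2 hx
  unfold logNumer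
  positivity

theorem sq_sqrt_one_sub_sq (ht : t ∈ Icc (-1 : ℝ) 1) : √(1 - t ^ 2) ^ 2 = 1 - t ^ 2 :=
  sq_sqrt (by nlinarith [ht.1, ht.2])

theorem hasDerivAt_log_logNumer_sub_log (hx : x ∈ Ioo (-1 : ℝ) 1) (ht : t ∈ Ioo (-1 : ℝ) 1)
    (htx : t ≠ x) :
    HasDerivAt (fun s => log (logNumer x s) - log (s - x))
      (-√(1 - x ^ 2) / ((t - x) * √(1 - t ^ 2))) t := by
  have hN := logNumer_pos hx (Ioo_subset_Icc_self ht)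
  have hs : 0 < √(1 - t ^ 2) := sqrt_pos.2 (by nlinarith [ht.1, ht.2])
  have hc2 := sq_sqrt_one_sub_sq (Ioo_subset_Icc_self hx)
  have hs2 := sq_sqrt_one_sub_sq (Ioo_subset_Icc_self ht)
  have htx' : t - x ≠ 0 := sub_ne_zero.2 htx
  have hNd : HasDerivAt (logNumer x) (-x + √(1 - x ^ 2) * (-t / √(1 - t ^ 2))) t :=
    ((((hasDerivAt_id' t).const_mul x).const_sub 1).add
      ((hasDerivAt_sqrt_one_sub_sq ht).const_mul _)).congr_deriv (by ring)
  refine ((hNd.log hN.ne').sub (((hasDerivAt_id' t).sub_const x).log htx')).congr_deriv ?_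
  unfold logNumer at hN ⊢
  field_simp
  linear_combination √(1 - t ^ 2) * hc2 - √(1 - x ^ 2) * hs2

-- `log (t - x)` is `log |t - x|`, so the formula serves on both sides of `x`.
noncomputable def rawPrimitive (x t : ℝ) : ℝ :=
  -√(1 - t ^ 2) / (t - x) - arcsin t + x / √(1 - x ^ 2) * (log (logNumer x t) - log (t - x))

theorem hasDerivAt_rawPrimitive (hx : x ∈ Ioo (-1 : ℝ) 1) (ht : t ∈ Ioo (-1 : ℝ) 1)
    (htx : t ≠ x) : HasDerivAt (rawPrimitive x) (√(1 - t ^ 2) / (t - x) ^ 2) t := by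
  have hc : 0 < √(1 - x ^ 2) := sqrt_pos.2 (by nlinarith [hx.1, hx.2])
  have hs : 0 < √(1 - t ^ 2) := sqrt_pos.2 (by nlinarith [ht.1, ht.2])
  have htx' : t - x ≠ 0 := sub_ne_zero.2 htx
  have hfrac := (hasDerivAt_sqrt_one_sub_sq ht).neg.div ((hasDerivAt_id' t).sub_const x) htx'
  have harcsin : HasDerivAt arcsin (1 / √(1 - t ^ 2)) t :=
    hasDerivAt_arcsin (by linarith [ht.1]) (by linarith [ht.2])
  refine ((hfrac.sub harcsin).add
    ((hasDerivAt_log_logNumer_sub_log hx ht htx).const_mul _)).congr_deriv ?_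
  simp only [Pi.neg_apply]
  field_simp
  ring

theorem continuousAt_rawPrimitive (hx : x ∈ Ioo (-1 : ℝ) 1) (ht : t ∈ Icc (-1 : ℝ) 1)
    (htx : t ≠ x) : ContinuousAt (rawPrimitive x) t := by
  have hN := (logNumer_pos hx ht).ne'
  have htx' : t - x ≠ 0 := sub_ne_zero.2 htx
  unfold rawPrimitive logNumer at *
  fun_prop (disch := assumption)

noncomputable def primitive (x t : ℝ) : ℝ := rawPrimitive x (max (-1) (min 1 t))

theorem primitive_eq_rawPrimitive (ht : t ∈ Icc (-1 : ℝ) 1) :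
    primitive x t = rawPrimitive x t := by
  rw [primitive, min_eq_right ht.2, max_eq_right ht.1]

theorem primitive_of_one_le (ht : 1 ≤ t) : primitive x t = -(π / 2) := by
  simp [primitive, min_eq_left ht, rawPrimitive, logNumer]

theorem primitive_of_le_neg_one (ht : t ≤ -1) : primitive x t = π / 2 := by
  have hclamp : max (-1) (min 1 t) = -1 := by
    rw [min_eq_right (by linarith), max_eq_left ht]
  have hlog : log (-1 - x) = log (1 + x) := by rw [← log_neg_eq_log]; ring_nf
  simp [primitive, hclamp, rawPrimitive, logNumer, hlog]

theorem hasDerivAt_primitive_of_ne (hx : x ∈ Ioo (-1 : ℝ) 1) (htx : t ≠ x) (ht₁ : t ≠ 1)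
    (ht₂ : t ≠ -1) : HasDerivAt (primitive x) (√(1 - t ^ 2) / (t - x) ^ 2) t := by
  rcases lt_or_gt_of_ne ht₂ with ht | ht
  · have hconst : primitive x =ᶠ[𝓝 t] fun _ => π / 2 :=
      eventually_of_mem (Iio_mem_nhds ht) fun y hy => primitive_of_le_neg_one (le_of_lt hy)
    rw [sqrt_eq_zero'.2 (by nlinarith), zero_div]
    exact (hasDerivAt_const t _).congr_of_eventuallyEq hconst
  rcases lt_or_gt_of_ne ht₁ with ht' | ht'
  · have hraw : primitive x =ᶠ[𝓝 t] rawPrimitive x :=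
      eventually_of_mem (Ioo_mem_nhds ht ht') fun y hy =>
        primitive_eq_rawPrimitive (Ioo_subset_Icc_self hy)
    exact (hasDerivAt_rawPrimitive hx ⟨ht, ht'⟩ htx).congr_of_eventuallyEq hraw
  · have hconst : primitive x =ᶠ[𝓝 t] fun _ => -(π / 2) :=
      eventually_of_mem (Ioi_mem_nhds ht') fun y hy => primitive_of_one_le (le_of_lt hy)
    rw [sqrt_eq_zero'.2 (by nlinarith), zero_div]
    exact (hasDerivAt_const t _).congr_of_eventuallyEq hconst

theorem hasDerivAt_primitive (hx : x ∈ Ioo (-1 : ℝ) 1) (htx : t ≠ x) :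
    HasDerivAt (primitive x) (√(1 - t ^ 2) / (t - x) ^ 2) t := by
  by_cases ht : t = 1 ∨ t = -1
  swap
  · exact hasDerivAt_primitive_of_ne hx htx (not_or.1 ht).1 (not_or.1 ht).2
  have hmem : t ∈ Icc (-1 : ℝ) 1 := by rcases ht with rfl | rfl <;> norm_num
  have hneg : t ≠ -t := by rcases ht with rfl | rfl <;> norm_num
  refine hasDerivAt_of_eventually_hasDerivAt_of_ne (g := fun t => √(1 - t ^ 2) / (t - x) ^ 2)
    ?_ ?_ ?_
  · filter_upwards [self_mem_nhdsWithin, nhdsWithin_le_nhds (eventually_ne_nhds htx),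
      nhdsWithin_le_nhds (eventually_ne_nhds hneg)] with y hyt hyx hyn
    have hy : y ≠ 1 ∧ y ≠ -1 := by rcases ht with rfl | rfl <;> simp_all
    exact hasDerivAt_primitive_of_ne hx hyx hy.1 hy.2
  · refine (continuousAt_rawPrimitive hx hmem htx).comp_of_eq (by fun_prop) ?_
    rw [min_eq_right hmem.2, max_eq_right hmem.1]
  · have : (t - x) ^ 2 ≠ 0 := pow_ne_zero 2 (sub_ne_zero.2 htx)
    fun_prop (disch := assumption)

noncomputable def integrand (x y : ℝ) : ℝ :=
  (2 * √(1 - x ^ 2) - √(1 - (x + y) ^ 2) - √(1 - (x - y) ^ 2)) / (2 * y ^ 2)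

-- `√(1 - x²) / 0 = 0`, so `integrandPrimitive x 0 = 0`.
noncomputable def integrandPrimitive (x y : ℝ) : ℝ :=
  (primitive x (x - y) - primitive x (x + y)) / 2 - √(1 - x ^ 2) / y

variable {y : ℝ}

theorem hasDerivAt_integrandPrimitive (hx : x ∈ Ioo (-1 : ℝ) 1) (hy : 0 < y) :
    HasDerivAt (integrandPrimitive x) (integrand x y) y := by
  have hminus := (hasDerivAt_primitive hx (by linarith : x - y ≠ x)).comp y
    ((hasDerivAt_id' y).const_sub x)
  have hplus := (hasDerivAt_primitive hx (by linarith : x + y ≠ x)).comp y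
    ((hasDerivAt_id' y).const_add x)
  refine (((hminus.sub hplus).div_const 2).sub
    ((hasDerivAt_const y _).div (hasDerivAt_id' y) hy.ne')).congr_deriv ?_
  rw [integrand, show x - y - x = -y by ring, show x + y - x = y by ring]
  field_simp
  ring

theorem tendsto_integrandPrimitive_atTop (x : ℝ) :
    Tendsto (integrandPrimitive x) atTop (𝓝 (π / 2)) := by
  have hlim : Tendsto (fun y => π / 2 - √(1 - x ^ 2) / y) atTop (𝓝 (π / 2 - 0)) :=
    tendsto_const_nhds.sub (tendsto_const_nhds.div_atTop tendsto_id)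
  rw [sub_zero] at hlim
  refine hlim.congr' ((eventually_ge_atTop (|x| + 1)).mono fun y hy => ?_)
  have h₁ : x - y ≤ -1 := by linarith [le_abs_self x]
  have h₂ : 1 ≤ x + y := by linarith [neg_abs_le x]
  rw [integrandPrimitive, primitive_of_le_neg_one h₁, primitive_of_one_le h₂]
  ring

theorem integrandPrimitive_eq (hy : 0 < y) (h₁ : -1 ≤ x - y) (h₂ : x + y ≤ 1) :
    integrandPrimitive x y =
      (√(1 - (x + y) ^ 2) + √(1 - (x - y) ^ 2) - 2 * √(1 - x ^ 2)) / (2 * y) +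
        ((arcsin (x + y) - arcsin (x - y)) +
          x / √(1 - x ^ 2) * (log (logNumer x (x - y)) - log (logNumer x (x + y)))) / 2 := by
  rw [integrandPrimitive, primitive_eq_rawPrimitive ⟨h₁, by linarith⟩,
    primitive_eq_rawPrimitive ⟨by linarith, h₂⟩, rawPrimitive, rawPrimitive,
    show x - y - x = -y by ring, show x + y - x = y by ring, log_neg_eq_log]
  field_simp
  ring

theorem tendsto_integrandPrimitive_nhdsGT_zero (hx : x ∈ Ioo (-1 : ℝ) 1) :
    Tendsto (integrandPrimitive x) (𝓝[>] 0) (𝓝 0) := by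
  set φ := fun y => √(1 - (x + y) ^ 2) + √(1 - (x - y) ^ 2)
  have hφ : HasDerivAt φ 0 0 := by
    have h := hasDerivAt_sqrt_one_sub_sq hx
    have hplus : HasDerivAt (fun y => √(1 - (x + y) ^ 2)) (-x / √(1 - x ^ 2)) 0 :=
      HasDerivAt.comp_const_add x 0 (f := fun s => √(1 - s ^ 2)) (by rwa [add_zero])
    have hminus : HasDerivAt (fun y => √(1 - (x - y) ^ 2)) (-(-x / √(1 - x ^ 2))) 0 :=
      HasDerivAt.comp_const_sub x 0 (f := fun s => √(1 - s ^ 2)) (by rwa [sub_zero])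
    exact (hplus.add hminus).congr_deriv (by ring)
  have hslope : Tendsto (fun y => (φ y - 2 * √(1 - x ^ 2)) / (2 * y)) (𝓝[>] 0) (𝓝 0) := by
    have h := (hasDerivAt_iff_tendsto_slope_zero.1 hφ).div_const 2
    rw [zero_div] at h
    refine (h.mono_left (nhdsWithin_mono _ fun y hy => ne_of_gt hy)).congr fun y => ?_
    simp only [φ, smul_eq_mul, zero_add, add_zero, sub_zero]
    ring
  have hrest : Tendsto (fun y => ((arcsin (x + y) - arcsin (x - y)) +
      x / √(1 - x ^ 2) * (log (logNumer x (x - y)) - log (logNumer x (x + y)))) / 2)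
      (𝓝[>] 0) (𝓝 0) := by
    have hN : logNumer x x ≠ 0 := (logNumer_pos hx (Ioo_subset_Icc_self hx)).ne'
    have hcont : ContinuousAt (fun y => ((arcsin (x + y) - arcsin (x - y)) +
        x / √(1 - x ^ 2) * (log (logNumer x (x - y)) - log (logNumer x (x + y)))) / 2) 0 := by
      unfold logNumer at hN ⊢
      fun_prop (disch := simp [hN])
    simpa using hcont.tendsto.mono_left nhdsWithin_le_nhds
  refine (zero_add (0 : ℝ) ▸ hslope.add hrest).congr' ?_
  have hδ : (0 : ℝ) < 1 - |x| := by rw [sub_pos, abs_lt]; exact hx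
  filter_upwards [Ioo_mem_nhdsGT hδ] with y hy
  rw [integrandPrimitive_eq hy.1 (by linarith [hy.2, neg_abs_le x])
    (by linarith [hy.2, le_abs_self x])]

theorem continuousWithinAt_integrandPrimitive_zero (hx : x ∈ Ioo (-1 : ℝ) 1) :
    ContinuousWithinAt (integrandPrimitive x) (Ici 0) 0 := by
  rw [← continuousWithinAt_Ioi_iff_Ici, ContinuousWithinAt]
  simpa [integrandPrimitive] using tendsto_integrandPrimitive_nhdsGT_zero hx

theorem integrand_nonneg (hy : 0 ≤ y) (h₁ : -1 ≤ x - y) (h₂ : x + y ≤ 1) :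
    0 ≤ integrand x y := by
  have hp := sq_sqrt (by nlinarith : 0 ≤ 1 - (x + y) ^ 2)
  have hm := sq_sqrt (by nlinarith : 0 ≤ 1 - (x - y) ^ 2)
  have hc := sq_sqrt (by nlinarith : 0 ≤ 1 - x ^ 2)
  have hsum : √(1 - (x + y) ^ 2) + √(1 - (x - y) ^ 2) ≤ 2 * √(1 - x ^ 2) := by
    nlinarith [sq_nonneg (√(1 - (x + y) ^ 2) - √(1 - (x - y) ^ 2)), sqrt_nonneg (1 - x ^ 2),
      sqrt_nonneg (1 - (x + y) ^ 2), sqrt_nonneg (1 - (x - y) ^ 2)]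
  exact div_nonneg (by linarith) (by positivity)

theorem norm_integrand_le (x y : ℝ) : ‖integrand x y‖ ≤ (y ^ 2)⁻¹ := by
  have hle : ∀ t : ℝ, √(1 - t ^ 2) ≤ 1 := fun t => sqrt_le_one.2 (by nlinarith)
  have hnum : |2 * √(1 - x ^ 2) - √(1 - (x + y) ^ 2) - √(1 - (x - y) ^ 2)| ≤ 2 := by
    rw [abs_le]
    constructor <;> linarith [hle x, hle (x + y), hle (x - y), sqrt_nonneg (1 - x ^ 2),
      sqrt_nonneg (1 - (x + y) ^ 2), sqrt_nonneg (1 - (x - y) ^ 2)]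
  calc ‖integrand x y‖
      = |2 * √(1 - x ^ 2) - √(1 - (x + y) ^ 2) - √(1 - (x - y) ^ 2)| / (2 * y ^ 2) := by
        rw [integrand, norm_div, norm_eq_abs, norm_eq_abs,
          abs_of_nonneg (by positivity : (0 : ℝ) ≤ 2 * y ^ 2)]
    _ ≤ 2 / (2 * y ^ 2) := div_le_div_of_nonneg_right hnum (by positivity)
    _ = (y ^ 2)⁻¹ := div_mul_cancel_left₀ two_ne_zero _

-- The integrand changes sign (e.g. at `x = y = 9/10`), so it is nonnegative only near `0`;
-- the tail is dominated by `y⁻²`.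
theorem integrableOn_integrand_Ioi (hx : x ∈ Ioo (-1 : ℝ) 1) :
    IntegrableOn (integrand x) (Ioi 0) := by
  set δ := 1 - |x|
  have hδ : 0 < δ := by rw [sub_pos, abs_lt]; exact hx
  have hnear : IntegrableOn (integrand x) (Ioc 0 δ) := by
    refine intervalIntegral.integrableOn_deriv_of_nonneg (g := integrandPrimitive x) ?_
      (fun y hy => hasDerivAt_integrandPrimitive hx hy.1) fun y hy => integrand_nonneg hy.1.le
        (by linarith [hy.2, neg_abs_le x]) (by linarith [hy.2, le_abs_self x])
    intro y hy
    rcases hy.1.eq_or_lt with rfl | hy0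
    · exact (continuousWithinAt_integrandPrimitive_zero hx).mono Icc_subset_Ici_self
    · exact (hasDerivAt_integrandPrimitive hx hy0).continuousAt.continuousWithinAt
  have hfar : IntegrableOn (integrand x) (Ioi δ) := by
    refine (integrableOn_Ioi_rpow_of_lt (by norm_num : (-2 : ℝ) < -1) hδ).mono' ?_ ?_
    · exact (by unfold integrand; fun_prop : Measurable (integrand x)).aestronglyMeasurable
    · filter_upwards [ae_restrict_mem measurableSet_Ioi] with y hy
      rw [rpow_neg (hδ.trans hy).le, rpow_two]
      exact norm_integrand_le x y
  rw [← Ioc_union_Ioi_eq_Ioi hδ.le]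
  exact hnear.union hfar

theorem integral_Ioi_integrand (hx : x ∈ Ioo (-1 : ℝ) 1) :
    ∫ y in Ioi 0, integrand x y = π / 2 := by
  rw [integral_Ioi_of_hasDerivAt_of_tendsto (continuousWithinAt_integrandPrimitive_zero hx)
    (fun y hy => hasDerivAt_integrandPrimitive hx hy) (integrableOn_integrand_Ioi hx)
    (tendsto_integrandPrimitive_atTop x)]
  rw [integrandPrimitive, sub_zero, add_zero, sub_self, zero_div, div_zero, sub_zero, sub_zero]

theorem integrand_abs (x y : ℝ) : integrand x |y| = integrand x y := by
  rcases le_total 0 y with hy | hy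
  · rw [abs_of_nonneg hy]
  · rw [abs_of_nonpos hy, integrand, integrand]
    ring_nf

theorem integral_integrand (hx : x ∈ Ioo (-1 : ℝ) 1) : ∫ y, integrand x y = π := by
  rw [← funext (integrand_abs x), integral_comp_abs, integral_Ioi_integrand hx]
  ring

end HalfLaplacianSemicircle

/-- the function `u(x) = (1-x²)₊^{1/2}` satisfies `(-Δ)^{1/2} u = 1` on
`(-1,1)`, where the half-Laplacian is the finite-difference singular integral
`(1/π) ∫_ℝ (2u(x)-u(x+y)-u(x-y))/(2y²) dy`. -/
theorem stmt_9 (u : ℝ → ℝ) (hu : ∀ x : ℝ, u x = Real.sqrt (max (1 - x^2) 0)) :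
    ∀ x ∈ Set.Ioo (-1:ℝ) 1,
      (1/Real.pi) * ∫ y : ℝ, (2 * u x - u (x+y) - u (x-y)) / (2 * y^2) = 1 := by
  intro x hx
  have hu' : ∀ t, u t = √(1 - t ^ 2) := fun t => by rw [hu, sqrt_max_zero]
  simp_rw [hu']
  change 1 / π * ∫ y, HalfLaplacianSemicircle.integrand x y = 1
  rw [HalfLaplacianSemicircle.integral_integrand hx]
  exact one_div_mul_cancel pi_ne_zero
end

section
/- Normalization of the nonlocal Poisson kernel in dimension N = 1 for σ ∈ (0,1): for every x with |x| < 1, ∫_{|y|>1} (γ_{1,σ}/|x-y|) · (1-x²)^σ/(y²-1)^σ dy = 1, where γ_{1,σ} = sin(πσ)/π. -/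
/-!
Folding `y ↦ -y` onto `(1, ∞)`, the two values of the kernel add up to
`(1 - x²)^σ · 2y / ((y² - x²)(y² - 1)^σ)`, and the substitution `t = (y² - 1)/(1 - x²)`,
for which `y² - x² = (1 - x²)(1 + t)`, turns this into `t^(-σ) / (1 + t) dt`. The further
substitution `t = u / (1 - u)` identifies `∫₀^∞ t^(-σ) / (1 + t) dt` with the beta integral
`B(1 - σ, σ) = Γ(1 - σ) Γ(σ) = π / sin (π σ)`, which is exactly `1 / γ_{1,σ}`.
-/

open Real MeasureTheory Set

section Beta

variable {a b : ℝ}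

lemma ofReal_rpow_mul_one_sub_rpow {u : ℝ} (hu : u ∈ Icc 0 1) :
    (u : ℂ) ^ ((a : ℂ) - 1) * (1 - (u : ℂ)) ^ ((b : ℂ) - 1)
      = ((u ^ (a - 1) * (1 - u) ^ (b - 1) : ℝ) : ℂ) := by
  have h1u : (0 : ℝ) ≤ 1 - u := by linarith [hu.2]
  rw [Complex.ofReal_mul, Complex.ofReal_cpow hu.1, Complex.ofReal_cpow h1u]
  push_cast
  ring

lemma integrableOn_rpow_mul_one_sub_rpow (ha : 0 < a) (hb : 0 < b) :
    IntegrableOn (fun u : ℝ => u ^ (a - 1) * (1 - u) ^ (b - 1)) (Ioo 0 1) := by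
  have hconv := Complex.betaIntegral_convergent (u := a) (v := b) (by simpa) (by simpa)
  rw [intervalIntegrable_iff_integrableOn_Ioc_of_le zero_le_one] at hconv
  refine ((hconv.mono_set Ioo_subset_Ioc_self).congr_fun
    (fun u hu => ofReal_rpow_mul_one_sub_rpow (Ioo_subset_Icc_self hu))
    measurableSet_Ioo).re.congr ?_
  exact Filter.Eventually.of_forall fun u => Complex.ofReal_re _

lemma integral_rpow_mul_one_sub_rpow (ha : 0 < a) (hb : 0 < b) :
    ∫ u in Ioo 0 1, u ^ (a - 1) * (1 - u) ^ (b - 1) = Gamma a * Gamma b / Gamma (a + b) := by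
  apply Complex.ofReal_injective
  have h := Complex.betaIntegral_eq_Gamma_mul_div a b (by simpa) (by simpa)
  rw [Complex.betaIntegral, intervalIntegral.integral_of_le zero_le_one,
    integral_Ioc_eq_integral_Ioo,
    setIntegral_congr_fun measurableSet_Ioo fun u hu =>
      ofReal_rpow_mul_one_sub_rpow (Ioo_subset_Icc_self hu),
    integral_complex_ofReal] at h
  rw [h, ← Complex.ofReal_add, Complex.Gamma_ofReal, Complex.Gamma_ofReal, Complex.Gamma_ofReal]
  push_cast
  rfl

end Beta

section Mellin

variable {a b : ℝ}

lemma image_div_one_sub_Ioo : (fun u : ℝ => u / (1 - u)) '' Ioo 0 1 = Ioi 0 := by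
  ext t
  constructor
  · rintro ⟨u, ⟨hu0, hu1⟩, rfl⟩
    exact div_pos hu0 (sub_pos.2 hu1)
  · intro (ht : 0 < t)
    refine ⟨t / (1 + t), ⟨by positivity, (div_lt_one (by positivity)).2 (by linarith)⟩, ?_⟩
    field_simp
    ring

lemma monotoneOn_div_one_sub : MonotoneOn (fun u : ℝ => u / (1 - u)) (Iio 1) := by
  intro u (hu : u < 1) v (hv : v < 1) huv
  simp only
  rw [div_le_div_iff₀ (sub_pos.2 hu) (sub_pos.2 hv)]
  nlinarith

lemma hasDerivAt_div_one_sub {u : ℝ} (hu : u ≠ 1) :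
    HasDerivAt (fun u : ℝ => u / (1 - u)) ((1 - u) ^ 2)⁻¹ u := by
  have h1u : 1 - u ≠ 0 := sub_ne_zero.2 (Ne.symm hu)
  refine ((hasDerivAt_id' u).div ((hasDerivAt_id' u).const_sub 1) h1u).congr_deriv ?_
  field_simp
  ring

lemma inv_one_sub_sq_mul_rpow_div_one_add_rpow {u : ℝ} (hu : u ∈ Ico 0 1) :
    ((1 - u) ^ 2)⁻¹ * ((u / (1 - u)) ^ (a - 1) / (1 + u / (1 - u)) ^ (a + b))
      = u ^ (a - 1) * (1 - u) ^ (b - 1) := by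
  have h1u : 0 < 1 - u := sub_pos.2 hu.2
  have hsum : 1 + u / (1 - u) = (1 - u)⁻¹ := by field_simp; ring
  have hsplit : (1 - u) ^ (a - 1) * (1 - u) ^ (b - 1) * (1 - u) ^ 2 = (1 - u) ^ (a + b) := by
    rw [← rpow_natCast, ← rpow_add h1u, ← rpow_add h1u]
    congr 1
    push_cast
    ring
  rw [hsum, div_rpow hu.1 h1u.le, inv_rpow h1u.le, ← hsplit]
  have : 0 < (1 - u) ^ (a - 1) := rpow_pos_of_pos h1u _
  have : 0 < (1 - u) ^ (b - 1) := rpow_pos_of_pos h1u _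
  field_simp

lemma integrableOn_rpow_div_one_add_rpow (ha : 0 < a) (hb : 0 < b) :
    IntegrableOn (fun t : ℝ => t ^ (a - 1) / (1 + t) ^ (a + b)) (Ioi 0) := by
  rw [← image_div_one_sub_Ioo, integrableOn_image_iff_integrableOn_deriv_smul_of_monotoneOn
    measurableSet_Ioo (fun u hu => (hasDerivAt_div_one_sub hu.2.ne).hasDerivWithinAt)
    (monotoneOn_div_one_sub.mono Ioo_subset_Iio_self)]
  exact (integrableOn_rpow_mul_one_sub_rpow ha hb).congr_fun
    (fun u hu => (inv_one_sub_sq_mul_rpow_div_one_add_rpow (Ioo_subset_Ico_self hu)).symm)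
    measurableSet_Ioo

lemma integral_rpow_div_one_add_rpow (ha : 0 < a) (hb : 0 < b) :
    ∫ t in Ioi 0, t ^ (a - 1) / (1 + t) ^ (a + b) = Gamma a * Gamma b / Gamma (a + b) := by
  rw [← image_div_one_sub_Ioo, integral_image_eq_integral_deriv_smul_of_monotoneOn
    measurableSet_Ioo (fun u hu => (hasDerivAt_div_one_sub hu.2.ne).hasDerivWithinAt)
    (monotoneOn_div_one_sub.mono Ioo_subset_Iio_self), ← integral_rpow_mul_one_sub_rpow ha hb]
  exact setIntegral_congr_fun measurableSet_Ioo fun u hu =>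
    inv_one_sub_sq_mul_rpow_div_one_add_rpow (Ioo_subset_Ico_self hu)

end Mellin

section Reflection

variable {σ : ℝ}

lemma integrableOn_rpow_neg_div_one_add (hσ : σ ∈ Ioo 0 1) :
    IntegrableOn (fun t : ℝ => t ^ (-σ) / (1 + t)) (Ioi 0) := by
  simpa using integrableOn_rpow_div_one_add_rpow (sub_pos.2 hσ.2) hσ.1

lemma integral_rpow_neg_div_one_add (hσ : σ ∈ Ioo 0 1) :
    ∫ t in Ioi 0, t ^ (-σ) / (1 + t) = π / sin (π * σ) := by
  simpa [mul_comm (Gamma (1 - σ)), Gamma_mul_Gamma_one_sub] using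
    integral_rpow_div_one_add_rpow (sub_pos.2 hσ.2) hσ.1

end Reflection

lemma setIntegral_lt_abs_eq_setIntegral_Ioi_add_comp_neg {E : Type*} [NormedAddCommGroup E]
    [NormedSpace ℝ E] {f : ℝ → E} {c : ℝ} (hc : 0 ≤ c) (h₁ : IntegrableOn f (Ioi c))
    (h₂ : IntegrableOn (fun y => f (-y)) (Ioi c)) :
    ∫ y in {y | c < |y|}, f y = ∫ y in Ioi c, (f y + f (-y)) := by
  have hsplit : {y : ℝ | c < |y|} = Iio (-c) ∪ Ioi c := by
    ext y
    show c < |y| ↔ y < -c ∨ c < y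
    rw [lt_abs, lt_neg, or_comm]
  have h₂' : IntegrableOn f (Iio (-c)) := by
    rw [← neg_neg c] at h₂
    simpa using h₂.comp_neg_Iio
  rw [hsplit, setIntegral_union ((Iic_disjoint_Ioi (by linarith)).mono_left Iio_subset_Iic_self)
    measurableSet_Ioi h₂' h₁,
    ← integral_Iic_eq_integral_Iio, ← integral_comp_neg_Ioi, integral_add h₁ h₂, add_comm]

lemma MeasureTheory.IntegrableOn.of_add_of_nonneg {α : Type*} [MeasurableSpace α]
    {μ : Measure α} {f g : α → ℝ} {s : Set α} (hs : MeasurableSet s)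
    (hfg : IntegrableOn (fun x => f x + g x) s μ) (hf : AEStronglyMeasurable f (μ.restrict s))
    (hf₀ : ∀ x ∈ s, 0 ≤ f x) (hg₀ : ∀ x ∈ s, 0 ≤ g x) : IntegrableOn f s μ := by
  refine hfg.mono' hf ((ae_restrict_iff' hs).2 (Filter.Eventually.of_forall fun x hx => ?_))
  rw [Real.norm_of_nonneg (hf₀ x hx)]
  linarith [hg₀ x hx]

section Substitution

variable {a : ℝ}

lemma image_sq_sub_one_div_Ioi (ha : 0 < a) :
    (fun y : ℝ => (y ^ 2 - 1) / a) '' Ioi 1 = Ioi 0 := by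
  ext t
  constructor
  · rintro ⟨y, hy : 1 < y, rfl⟩
    exact div_pos (by nlinarith) ha
  · intro (ht : 0 < t)
    have hat : 0 < a * t := mul_pos ha ht
    refine ⟨√(1 + a * t), (lt_sqrt zero_le_one).2 (by linarith), ?_⟩
    show (√(1 + a * t) ^ 2 - 1) / a = t
    rw [sq_sqrt (by linarith)]
    field_simp
    ring

lemma monotoneOn_sq_sub_one_div (ha : 0 ≤ a) :
    MonotoneOn (fun y : ℝ => (y ^ 2 - 1) / a) (Ici 0) := fun _ hy _ _ hyz =>
  div_le_div_of_nonneg_right (by nlinarith [mem_Ici.1 hy]) ha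

lemma hasDerivAt_sq_sub_one_div (y : ℝ) :
    HasDerivAt (fun y : ℝ => (y ^ 2 - 1) / a) (2 * y / a) y := by
  simpa using ((hasDerivAt_pow 2 y).sub_const 1).div_const a

end Substitution

/-- The fractional Poisson kernel of `(-1, 1)` without its normalising constant `γ_{1,σ}`. -/
noncomputable def unnormalizedPoissonKernel (σ x y : ℝ) : ℝ :=
  (1 - x ^ 2) ^ σ / (|x - y| * (y ^ 2 - 1) ^ σ)

namespace unnormalizedPoissonKernel

variable {σ x y : ℝ}

lemma nonneg (hx : |x| ≤ 1) (hy : 1 ≤ |y|) : 0 ≤ unnormalizedPoissonKernel σ x y := by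
  have : 0 ≤ 1 - x ^ 2 := by nlinarith [sq_abs x, abs_nonneg x]
  have : 0 ≤ y ^ 2 - 1 := by nlinarith [sq_abs y]
  unfold unnormalizedPoissonKernel
  positivity

lemma measurable : Measurable (unnormalizedPoissonKernel σ x) := by
  unfold unnormalizedPoissonKernel
  fun_prop

lemma add_neg_eq (hx : |x| < 1) (hy : 1 < y) :
    unnormalizedPoissonKernel σ x y + unnormalizedPoissonKernel σ x (-y)
      = (2 * y / (1 - x ^ 2)) • (((y ^ 2 - 1) / (1 - x ^ 2)) ^ (-σ)
          / (1 + (y ^ 2 - 1) / (1 - x ^ 2))) := by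
  obtain ⟨hx₁, hx₂⟩ := abs_lt.1 hx
  have ha : 0 < 1 - x ^ 2 := by nlinarith
  have hb : 0 < y ^ 2 - 1 := by nlinarith
  have hsum : 1 + (y ^ 2 - 1) / (1 - x ^ 2) = (y - x) * (x + y) / (1 - x ^ 2) := by
    field_simp
    ring
  rw [unnormalizedPoissonKernel, unnormalizedPoissonKernel, abs_sub_comm x,
    abs_of_pos (by linarith : 0 < y - x), sub_neg_eq_add, abs_of_pos (by linarith : 0 < x + y),
    neg_sq, hsum, rpow_neg (div_pos hb ha).le, div_rpow hb.le ha.le, smul_eq_mul]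
  have hA : 0 < (1 - x ^ 2) ^ σ := rpow_pos_of_pos ha σ
  have hB : 0 < (y ^ 2 - 1) ^ σ := rpow_pos_of_pos hb σ
  have : y - x ≠ 0 := by linarith
  have : x + y ≠ 0 := by linarith
  field_simp
  ring

lemma integrableOn_Ioi_one_add_neg (hσ : σ ∈ Ioo 0 1) (hx : |x| < 1) :
    IntegrableOn (fun y => unnormalizedPoissonKernel σ x y + unnormalizedPoissonKernel σ x (-y))
      (Ioi 1) := by
  have ha : 0 < 1 - x ^ 2 := by nlinarith [abs_lt.1 hx]
  have h := integrableOn_rpow_neg_div_one_add hσ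
  rw [← image_sq_sub_one_div_Ioi ha, integrableOn_image_iff_integrableOn_deriv_smul_of_monotoneOn
    measurableSet_Ioi (fun y _ => (hasDerivAt_sq_sub_one_div y).hasDerivWithinAt)
    ((monotoneOn_sq_sub_one_div ha.le).mono (Ioi_subset_Ici zero_le_one))] at h
  exact h.congr_fun (fun y hy => (add_neg_eq hx hy).symm) measurableSet_Ioi

lemma integral_Ioi_one_add_neg (hσ : σ ∈ Ioo 0 1) (hx : |x| < 1) :
    ∫ y in Ioi 1, (unnormalizedPoissonKernel σ x y + unnormalizedPoissonKernel σ x (-y))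
      = π / sin (π * σ) := by
  have ha : 0 < 1 - x ^ 2 := by nlinarith [abs_lt.1 hx]
  rw [← integral_rpow_neg_div_one_add hσ, ← image_sq_sub_one_div_Ioi ha,
    integral_image_eq_integral_deriv_smul_of_monotoneOn measurableSet_Ioi
      (fun y _ => (hasDerivAt_sq_sub_one_div y).hasDerivWithinAt)
      ((monotoneOn_sq_sub_one_div ha.le).mono (Ioi_subset_Ici zero_le_one))]
  exact setIntegral_congr_fun measurableSet_Ioi fun y hy => add_neg_eq hx hy

lemma integrableOn_Ioi_one (hσ : σ ∈ Ioo 0 1) (hx : |x| < 1) :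
    IntegrableOn (unnormalizedPoissonKernel σ x) (Ioi 1) :=
  (integrableOn_Ioi_one_add_neg hσ hx).of_add_of_nonneg measurableSet_Ioi
    measurable.aestronglyMeasurable
    (fun y (hy : 1 < y) => nonneg hx.le (by rw [abs_of_pos (by linarith)]; exact hy.le))
    (fun y (hy : 1 < y) => nonneg hx.le (by rw [abs_neg, abs_of_pos (by linarith)]; exact hy.le))

lemma integrableOn_Ioi_one_comp_neg (hσ : σ ∈ Ioo 0 1) (hx : |x| < 1) :
    IntegrableOn (fun y => unnormalizedPoissonKernel σ x (-y)) (Ioi 1) :=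
  ((integrableOn_Ioi_one_add_neg hσ hx).congr_fun (fun _ _ => add_comm _ _)
    measurableSet_Ioi).of_add_of_nonneg measurableSet_Ioi
    (measurable.comp measurable_neg).aestronglyMeasurable
    (fun y (hy : 1 < y) => nonneg hx.le (by rw [abs_neg, abs_of_pos (by linarith)]; exact hy.le))
    (fun y (hy : 1 < y) => nonneg hx.le (by rw [abs_of_pos (by linarith)]; exact hy.le))

theorem integral_one_lt_abs (hσ : σ ∈ Ioo 0 1) (hx : |x| < 1) :
    ∫ y in {y | 1 < |y|}, unnormalizedPoissonKernel σ x y = π / sin (π * σ) := by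
  rw [setIntegral_lt_abs_eq_setIntegral_Ioi_add_comp_neg zero_le_one (integrableOn_Ioi_one hσ hx)
    (integrableOn_Ioi_one_comp_neg hσ hx), integral_Ioi_one_add_neg hσ hx]

end unnormalizedPoissonKernel

/-- normalization of the nonlocal Poisson kernel in dimension one: for
`σ ∈ (0,1)` and `|x| < 1`,
`∫_{|y|>1} (γ_{1,σ}/|x-y|) (1-x²)^σ/(y²-1)^σ dy = 1`, where `γ_{1,σ} = sin(πσ)/π`. -/
theorem stmt_11 (σ : ℝ) (hσ : σ ∈ Set.Ioo (0:ℝ) 1) (γ : ℝ)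
    (hγ : γ = Real.sin (Real.pi * σ) / Real.pi) :
    ∀ x : ℝ, |x| < 1 →
      ∫ y in {y : ℝ | 1 < |y|},
        (γ / |x - y|) * (1 - x^2) ^ σ / (y^2 - 1) ^ σ = 1 := by
  intro x hx
  have hsin : sin (π * σ) ≠ 0 :=
    (sin_pos_of_pos_of_lt_pi (mul_pos pi_pos hσ.1) (mul_lt_of_lt_one_right pi_pos hσ.2)).ne'
  calc ∫ y in {y : ℝ | 1 < |y|}, (γ / |x - y|) * (1 - x ^ 2) ^ σ / (y ^ 2 - 1) ^ σ
      = ∫ y in {y : ℝ | 1 < |y|}, γ * unnormalizedPoissonKernel σ x y := by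
        congr 1 with y
        rw [unnormalizedPoissonKernel]
        ring
    _ = γ * (π / sin (π * σ)) := by
        rw [integral_const_mul, unnormalizedPoissonKernel.integral_one_lt_abs hσ hx]
    _ = 1 := by
        rw [hγ]
        field_simp
end

section
/- In dimension N = 1 with s = 3/2, the function u(x) = ∫_{-1}^{1} G_{3/2}(x,y) dy, where G_{3/2} is the Boggio kernel on the interval (-1,1), satisfies the two-sided bound: there exist constants 0 < c ≤ C such that c·(1-x²)^{3/2} ≤ u(x) ≤ C·(1-x²)^{3/2} for all x ∈ (-1,1). -/
/-!
For `s = 3/2` the kernel is `G(x, y) = k |x - y|² Φ(ρ)` with `Φ(r) = ∫₀^r √(t / (1 + t)) dt`.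
Bounding the integrand above by its value at `r` and below by `√t / √(1 + r)` shows
`(2/3) r √(r / (1 + r)) ≤ Φ(r) ≤ r √(r / (1 + r))`. Because
`|x - y|² + (1 - x²)(1 - y²) = (1 - xy)²`, the quantity `|x - y|² ρ √(ρ / (1 + ρ))` equals
`(1 - x²)^{3/2} (1 - y²)^{3/2} / (1 - xy)`, and the factor `(1 - y²)^{3/2} / (1 - xy)` lies in
`[0, 2]` for all `y`, and in `[3/16, 2]` for `|y| < 1/2`. Integrating over `y` gives
`k/8 · (1 - x²)^{3/2} ≤ u(x) ≤ 4k · (1 - x²)^{3/2}`.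
-/

open Real MeasureTheory Set

noncomputable def boggioProfile (s r : ℝ) : ℝ :=
  ∫ t in Ioo 0 r, t ^ (s - 1) * (1 + t) ^ (-(1:ℝ)/2)

lemma rpow_three_halves {x : ℝ} (hx : 0 ≤ x) : x ^ ((3:ℝ)/2) = x * √x := by
  rw [show (3:ℝ)/2 = 1 + 1/2 by norm_num, rpow_one_add' hx (by norm_num), sqrt_eq_rpow]

lemma continuousOn_sqrt_div_one_add : ContinuousOn (fun t : ℝ => √(t / (1 + t))) (Ici 0) :=
  (continuousOn_id.div (by fun_prop) fun t (ht : 0 ≤ t) => by positivity).sqrt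

lemma boggioProfile_three_halves (r : ℝ) :
    boggioProfile (3/2) r = ∫ t in Ioo 0 r, √(t / (1 + t)) := by
  refine setIntegral_congr_fun measurableSet_Ioo fun t ht => ?_
  have ht' : 0 < 1 + t := by linarith [ht.1]
  rw [show (3:ℝ)/2 - 1 = 1/2 by norm_num, show -(1:ℝ)/2 = -(1/2) by norm_num, rpow_neg ht'.le,
    ← div_eq_mul_inv, sqrt_eq_rpow, div_rpow ht.1.le ht'.le]

lemma integrableOn_sqrt_div_one_add (r : ℝ) :
    IntegrableOn (fun t : ℝ => √(t / (1 + t))) (Icc 0 r) :=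
  (continuousOn_sqrt_div_one_add.mono Icc_subset_Ici_self).integrableOn_Icc

lemma boggioProfile_three_halves_nonneg (r : ℝ) : 0 ≤ boggioProfile (3/2) r := by
  rw [boggioProfile_three_halves]
  exact setIntegral_nonneg measurableSet_Ioo fun t _ => sqrt_nonneg _

lemma monotone_boggioProfile_three_halves : Monotone (boggioProfile (3/2)) := by
  intro a b hab
  simp only [boggioProfile_three_halves]
  exact setIntegral_mono_set ((integrableOn_sqrt_div_one_add b).mono_set Ioo_subset_Icc_self)
    (.of_forall fun t => sqrt_nonneg _)
    (Ioo_subset_Ioo_right hab).eventuallyLE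

lemma boggioProfile_three_halves_le {r : ℝ} (hr : 0 ≤ r) :
    boggioProfile (3/2) r ≤ r * √(r / (1 + r)) := by
  have hbound : ∀ t ∈ Ioo 0 r, ‖√(t / (1 + t))‖ ≤ √(r / (1 + r)) := fun t ht => by
    rw [norm_of_nonneg (sqrt_nonneg _)]
    refine sqrt_le_sqrt ?_
    rw [div_le_div_iff₀ (by linarith [ht.1]) (by linarith)]
    nlinarith [ht.2]
  calc boggioProfile (3/2) r ≤ ‖boggioProfile (3/2) r‖ := le_norm_self _
    _ ≤ √(r / (1 + r)) * volume.real (Ioo 0 r) := by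
      rw [boggioProfile_three_halves]
      exact norm_setIntegral_le_of_norm_le_const measure_Ioo_lt_top hbound
    _ = r * √(r / (1 + r)) := by simp [hr, mul_comm]

lemma integral_sqrt {r : ℝ} (hr : 0 ≤ r) : ∫ t in (0:ℝ)..r, √t = 2/3 * (r * √r) := by
  simp_rw [sqrt_eq_rpow]
  rw [integral_rpow (Or.inl (by norm_num)), zero_rpow (by norm_num), ← sqrt_eq_rpow,
    ← rpow_three_halves hr]
  norm_num
  ring

lemma le_boggioProfile_three_halves {r : ℝ} (hr : 0 ≤ r) :
    2/3 * (r * √(r / (1 + r))) ≤ boggioProfile (3/2) r := by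
  have h1r : 0 < 1 + r := by linarith
  rw [boggioProfile_three_halves, ← integral_Ioc_eq_integral_Ioo,
    ← intervalIntegral.integral_of_le hr]
  calc 2/3 * (r * √(r / (1 + r))) = ∫ t in (0:ℝ)..r, √t / √(1 + r) := by
        rw [intervalIntegral.integral_div, integral_sqrt hr, sqrt_div' _ h1r.le]
        ring
    _ ≤ ∫ t in (0:ℝ)..r, √(t / (1 + t)) := by
      refine intervalIntegral.integral_mono_on hr
        ((continuous_sqrt.div_const _).intervalIntegrable _ _)
        ((intervalIntegrable_iff_integrableOn_Ioc_of_le hr).2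
          ((integrableOn_sqrt_div_one_add r).mono_set Ioc_subset_Icc_self)) fun t ht => ?_
      rw [← sqrt_div' _ h1r.le]
      exact sqrt_le_sqrt
        (div_le_div_of_nonneg_left ht.1 (by linarith [ht.1]) (by linarith [ht.2]))

noncomputable def boggioRho (x y : ℝ) : ℝ := (1 - x^2) * (1 - y^2) / |x - y|^2

lemma one_sub_sq_pos {x : ℝ} (hx : x ∈ Ioo (-1:ℝ) 1) : 0 < 1 - x^2 := by
  nlinarith [hx.1, hx.2]

lemma one_sub_mul_pos {x y : ℝ} (hx : x ∈ Ioo (-1:ℝ) 1) (hy : y ∈ Ioo (-1:ℝ) 1) :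
    0 < 1 - x * y := by
  nlinarith [abs_lt.2 hx, abs_lt.2 hy, abs_mul x y, abs_nonneg x, abs_nonneg y, le_abs_self (x*y)]

lemma boggioRho_nonneg {x y : ℝ} (hx : x ∈ Ioo (-1:ℝ) 1) (hy : y ∈ Ioo (-1:ℝ) 1) :
    0 ≤ boggioRho x y := by
  have := one_sub_sq_pos hx
  have := one_sub_sq_pos hy
  unfold boggioRho
  positivity

lemma sq_abs_sub_mul_boggioRho_mul_sqrt {x y : ℝ} (hx : x ∈ Ioo (-1:ℝ) 1)
    (hy : y ∈ Ioo (-1:ℝ) 1) (hne : x ≠ y) :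
    |x - y|^2 * (boggioRho x y * √(boggioRho x y / (1 + boggioRho x y))) =
      (1 - x^2) * √(1 - x^2) * ((1 - y^2) * √(1 - y^2)) / (1 - x * y) := by
  have hA := one_sub_sq_pos hx
  have hB := one_sub_sq_pos hy
  have hP := one_sub_mul_pos hx hy
  have hd : 0 < |x - y|^2 := pow_pos (abs_pos.2 (sub_ne_zero.2 hne)) 2
  have hratio : boggioRho x y / (1 + boggioRho x y) = (1 - x^2) * (1 - y^2) / (1 - x * y)^2 := by
    unfold boggioRho
    rw [sq_abs] at hd ⊢
    field_simp
    ring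
  rw [hratio, sqrt_div' _ (sq_nonneg _), sqrt_sq hP.le, sqrt_mul hA.le, boggioRho]
  field_simp

/-- The Boggio kernel `G_{3/2}` on `(-1, 1)` divided by its normalising constant `k_{1,3/2}`. -/
noncomputable def boggioKernel (x y : ℝ) : ℝ :=
  |x - y|^2 * boggioProfile (3/2) (boggioRho x y)

lemma boggioKernel_nonneg (x y : ℝ) : 0 ≤ boggioKernel x y :=
  mul_nonneg (sq_nonneg _) (boggioProfile_three_halves_nonneg _)

lemma measurable_boggioKernel (x : ℝ) : Measurable (boggioKernel x) := by
  have : Measurable (boggioRho x) := by unfold boggioRho; fun_prop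
  unfold boggioKernel
  exact (by fun_prop : Measurable fun y => |x - y|^2).mul
    (monotone_boggioProfile_three_halves.measurable.comp this)

lemma boggioKernel_bounds {x y : ℝ} (hx : x ∈ Ioo (-1:ℝ) 1) (hy : y ∈ Ioo (-1:ℝ) 1)
    (hne : x ≠ y) :
    2/3 * ((1 - x^2) * √(1 - x^2) * ((1 - y^2) * √(1 - y^2)) / (1 - x * y)) ≤
        boggioKernel x y ∧
      boggioKernel x y ≤ (1 - x^2) * √(1 - x^2) * ((1 - y^2) * √(1 - y^2)) / (1 - x * y) := by
  have hρ := boggioRho_nonneg hx hy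
  rw [← sq_abs_sub_mul_boggioRho_mul_sqrt hx hy hne, boggioKernel, mul_left_comm]
  exact ⟨by gcongr; exact le_boggioProfile_three_halves hρ,
    by gcongr; exact boggioProfile_three_halves_le hρ⟩

lemma boggioKernel_le {x y : ℝ} (hx : x ∈ Ioo (-1:ℝ) 1) (hy : y ∈ Ioo (-1:ℝ) 1) (hne : x ≠ y) :
    boggioKernel x y ≤ 2 * ((1 - x^2) * √(1 - x^2)) := by
  have hA := one_sub_sq_pos hx
  have hB := one_sub_sq_pos hy
  have hP := one_sub_mul_pos hx hy
  have hsqrt : √(1 - y^2) ≤ 1 := sqrt_le_one.2 (by nlinarith)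
  have hfactor : (1 - y^2) * √(1 - y^2) ≤ 2 * (1 - x * y) := by
    nlinarith [sq_nonneg (x - y)]
  refine (boggioKernel_bounds hx hy hne).2.trans ?_
  rw [mul_div_assoc, mul_comm 2]
  gcongr
  rwa [div_le_iff₀ hP]

lemma le_boggioKernel {x y : ℝ} (hx : x ∈ Ioo (-1:ℝ) 1) (hy : y ∈ Ioo (-(1:ℝ)/2) (1/2))
    (hne : x ≠ y) :
    1/8 * ((1 - x^2) * √(1 - x^2)) ≤ boggioKernel x y := by
  have hy' : y ∈ Ioo (-1:ℝ) 1 := ⟨by linarith [hy.1], by linarith [hy.2]⟩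
  have hA := one_sub_sq_pos hx
  have hP := one_sub_mul_pos hx hy'
  have hB : 3/4 ≤ 1 - y^2 := by nlinarith [hy.1, hy.2]
  have hsqrt : 1/2 ≤ √(1 - y^2) := le_sqrt_of_sq_le (by linarith)
  have hP2 : 1 - x * y ≤ 2 := by nlinarith [hx.1, hx.2, hy.1, hy.2]
  have hfactor : 3/16 ≤ (1 - y^2) * √(1 - y^2) / (1 - x * y) := by
    rw [le_div_iff₀ hP]
    nlinarith
  refine le_trans ?_ (boggioKernel_bounds hx hy' hne).1
  rw [mul_div_assoc]
  have : 0 ≤ (1 - x^2) * √(1 - x^2) := by positivity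
  nlinarith

lemma ae_norm_boggioKernel_le {x : ℝ} (hx : x ∈ Ioo (-1:ℝ) 1) :
    ∀ᵐ y ∂volume.restrict (Ioo (-1:ℝ) 1), ‖boggioKernel x y‖ ≤ 2 * ((1 - x^2) * √(1 - x^2)) := by
  filter_upwards [ae_restrict_mem measurableSet_Ioo, ae_restrict_of_ae (volume.ae_ne x)]
    with y hy hne
  rw [norm_of_nonneg (boggioKernel_nonneg x y)]
  exact boggioKernel_le hx hy hne.symm

lemma integrableOn_boggioKernel {x : ℝ} (hx : x ∈ Ioo (-1:ℝ) 1) :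
    IntegrableOn (boggioKernel x) (Ioo (-1) 1) :=
  Measure.integrableOn_of_bounded measure_Ioo_lt_top.ne
    (measurable_boggioKernel x).aestronglyMeasurable (ae_norm_boggioKernel_le hx)

lemma setIntegral_boggioKernel_le {x : ℝ} (hx : x ∈ Ioo (-1:ℝ) 1) :
    ∫ y in Ioo (-1) 1, boggioKernel x y ≤ 4 * ((1 - x^2) * √(1 - x^2)) :=
  calc ∫ y in Ioo (-1) 1, boggioKernel x y ≤ ‖∫ y in Ioo (-1) 1, boggioKernel x y‖ :=
        le_norm_self _
    _ ≤ 2 * ((1 - x^2) * √(1 - x^2)) * volume.real (Ioo (-1:ℝ) 1) :=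
        norm_setIntegral_le_of_norm_le_const_ae measure_Ioo_lt_top (ae_norm_boggioKernel_le hx)
    _ = 4 * ((1 - x^2) * √(1 - x^2)) := by norm_num; ring

lemma le_setIntegral_boggioKernel {x : ℝ} (hx : x ∈ Ioo (-1:ℝ) 1) :
    1/8 * ((1 - x^2) * √(1 - x^2)) ≤ ∫ y in Ioo (-1) 1, boggioKernel x y := by
  have hsub : Ioo (-(1:ℝ)/2) (1/2) ⊆ Ioo (-1) 1 := Ioo_subset_Ioo (by norm_num) (by norm_num)
  have hint := integrableOn_boggioKernel hx
  calc 1/8 * ((1 - x^2) * √(1 - x^2))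
      = ∫ _ in Ioo (-(1:ℝ)/2) (1/2), 1/8 * ((1 - x^2) * √(1 - x^2)) := by simp; norm_num
    _ ≤ ∫ y in Ioo (-(1:ℝ)/2) (1/2), boggioKernel x y := by
      refine setIntegral_mono_on_ae (integrableOn_const measure_Ioo_lt_top.ne)
        (hint.mono_set hsub) measurableSet_Ioo ?_
      filter_upwards [volume.ae_ne x] with y hne hy
      exact le_boggioKernel hx hy hne.symm
    _ ≤ ∫ y in Ioo (-1) 1, boggioKernel x y :=
      setIntegral_mono_set hint (.of_forall fun y => boggioKernel_nonneg x y) hsub.eventuallyLE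

/-- in dimension `1` with `s = 3/2`, the solution
`u(x) = ∫_{-1}^1 G_{3/2}(x,y) dy` given by the Boggio kernel satisfies the two-sided
boundary estimate `c (1-x²)^{3/2} ≤ u(x) ≤ C (1-x²)^{3/2}` on `(-1,1)`. -/
theorem stmt_12 (s k : ℝ) (hs : s = 3/2) (hk : k = 2 ^ (1 - 2*s) / (2 * Real.Gamma s ^ 2))
    (ρ G : ℝ → ℝ → ℝ)
    (hρ : ∀ x y, ρ x y = (1 - x^2) * (1 - y^2) / |x - y|^2)
    (hG : ∀ x y, G x y = k * |x - y| ^ (2*s - 1) *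
      ∫ t in Set.Ioo (0:ℝ) (ρ x y), t ^ (s - 1) * (1 + t) ^ (-(1:ℝ)/2))
    (u : ℝ → ℝ) (hu : ∀ x, u x = ∫ y in Set.Ioo (-1:ℝ) 1, G x y) :
    ∃ c C : ℝ, 0 < c ∧ c ≤ C ∧ ∀ x ∈ Set.Ioo (-1:ℝ) 1,
      c * (1 - x^2) ^ ((3:ℝ)/2) ≤ u x ∧ u x ≤ C * (1 - x^2) ^ ((3:ℝ)/2) := by
  subst hs
  have hk0 : 0 < k := by
    rw [hk]
    have := Gamma_pos_of_pos (by norm_num : (0:ℝ) < 3/2)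
    positivity
  have hGK : ∀ x y, G x y = k * boggioKernel x y := fun x y => by
    rw [hG, boggioKernel, boggioProfile, boggioRho, ← hρ, mul_assoc]
    norm_num
  refine ⟨k/8, 4*k, by positivity, by linarith, fun x hx => ?_⟩
  have hux : u x = k * ∫ y in Ioo (-1) 1, boggioKernel x y := by
    simp only [hu, hGK, integral_const_mul]
  rw [hux, rpow_three_halves (one_sub_sq_pos hx).le]
  constructor
  · nlinarith [le_setIntegral_boggioKernel hx]
  · nlinarith [setIntegral_boggioKernel_le hx]
end
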